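/- Every ellipsoid in ℝⁿ (the image of the closed Euclidean unit ball under an invertible affine map) is uniquely determined among all convex bodies in ℝⁿ by its geometric moments of order at most 2: if E is an ellipsoid and L is a convex body with μ_α(L) = μ_α(E) for all multi-indices α with |α| ≤ 2, then L = E. -/

import Mathlib

/-!
For `E = A '' closedBall 0 1` put `φ x = ‖A⁻¹ x‖² - 1`: a polynomial of degree two, `≤ 0` on `E`
and `> 0` off `E`. Equal moments of order `≤ 2` give `∫_L φ = ∫_E φ`, i.e.
`∫_{L \ E} φ = ∫_{E \ L} φ ≤ 0`, so `L \ E` is null. A convex body is the closure of its interior,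
hence `L ⊆ E`; equal volumes then make `E \ L` null, and `E ⊆ L` in the same way.
-/

open MeasureTheory

/-- The geometric moment `μ_α(K) = ∫_K x^α dx` of a set `K ⊆ ℝⁿ`. -/
noncomputable def geomMoment {n : ℕ} (α : Fin n → ℕ) (K : Set (EuclideanSpace ℝ (Fin n))) : ℝ :=
  ∫ x in K, ∏ i, (x i) ^ (α i)

/-- A convex body: a compact convex set with nonempty interior. -/
def IsConvexBody {n : ℕ} (K : Set (EuclideanSpace ℝ (Fin n))) : Prop :=
  IsCompact K ∧ Convex ℝ K ∧ (interior K).Nonempty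

/-- An ellipsoid: the image of the closed Euclidean unit ball under an invertible affine map. -/
def IsEllipsoid {n : ℕ} (E : Set (EuclideanSpace ℝ (Fin n))) : Prop :=
  ∃ A : EuclideanSpace ℝ (Fin n) ≃ᵃ[ℝ] EuclideanSpace ℝ (Fin n),
    E = A '' Metric.closedBall 0 1

open Set MvPolynomial

theorem Convex.subset_of_measure_sdiff_eq_zero {X : Type*} [AddCommGroup X] [Module ℝ X]
    [TopologicalSpace X] [IsTopologicalAddGroup X] [ContinuousSMul ℝ X] [MeasurableSpace X]
    {μ : Measure X} [μ.IsOpenPosMeasure] {K M : Set X} (hK : Convex ℝ K)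
    (hKint : (interior K).Nonempty) (hM : IsClosed M) (hnull : μ (K \ M) = 0) : K ⊆ M := by
  have hint : interior K ⊆ M := by
    have : interior K \ M = ∅ := ((isOpen_interior.sdiff hM).measure_eq_zero_iff μ).mp
      (measure_mono_null (sdiff_subset_sdiff_left interior_subset) hnull)
    exact sdiff_eq_empty.mp this
  calc K ⊆ closure K := subset_closure
    _ = closure (interior K) := (hK.closure_interior_eq_closure_of_nonempty_interior hKint).symm
    _ ⊆ M := closure_minimal hint hM

theorem measure_sdiff_eq_zero_of_setIntegral_eq {α : Type*} [MeasurableSpace α] {μ : Measure α}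
    {s t : Set α} {φ : α → ℝ} (hs : MeasurableSet s) (ht : MeasurableSet t)
    (hφs : IntegrableOn φ s μ) (hφt : IntegrableOn φ t μ) (hle : ∀ x ∈ t, φ x ≤ 0)
    (hpos : ∀ x ∉ t, 0 < φ x) (heq : ∫ x in s, φ x ∂μ = ∫ x in t, φ x ∂μ) : μ (s \ t) = 0 := by
  have hsdiff : ∫ x in s \ t, φ x ∂μ = ∫ x in t \ s, φ x ∂μ := by
    have hs' := integral_inter_add_sdiff ht hφs
    have ht' := integral_inter_add_sdiff hs hφt
    rw [inter_comm] at ht'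
    linarith
  have hnonpos : ∫ x in t \ s, φ x ∂μ ≤ 0 :=
    setIntegral_nonpos (ht.diff hs) fun x hx => hle x hx.1
  by_contra hne
  have hpos_int : 0 < ∫ x in s \ t, φ x ∂μ := by
    rw [setIntegral_pos_iff_support_of_nonneg_ae
      ((ae_restrict_iff' (hs.diff ht)).mpr (.of_forall fun x hx => (hpos x hx.2).le))
      (hφs.mono_set sdiff_subset)]
    rwa [inter_eq_right.mpr fun x hx => Function.mem_support.mpr (hpos x hx.2).ne',
      pos_iff_ne_zero]
  linarith

section Moments

variable {n : ℕ}

theorem geomMoment_zero (K : Set (EuclideanSpace ℝ (Fin n))) :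
    geomMoment 0 K = volume.real K := by
  simp [geomMoment]

theorem integrableOn_eval {K : Set (EuclideanSpace ℝ (Fin n))} (hK : IsCompact K)
    (p : MvPolynomial (Fin n) ℝ) :
    IntegrableOn (fun x : EuclideanSpace ℝ (Fin n) => eval x p) K :=
  ((continuous_eval p).comp (PiLp.continuous_ofLp 2 _)).continuousOn.integrableOn_compact hK

theorem setIntegral_eval_eq_sum_geomMoment {K : Set (EuclideanSpace ℝ (Fin n))}
    (hK : IsCompact K) (p : MvPolynomial (Fin n) ℝ) :
    ∫ x in K, eval x p = ∑ s ∈ p.support, p.coeff s * geomMoment s K := by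
  simp_rw [eval_eq']
  rw [integral_finsetSum]
  · exact Finset.sum_congr rfl fun s _ => integral_const_mul _ _
  · intro s _
    show IntegrableOn _ K
    simpa [eval_monomial, Finsupp.prod_fintype] using integrableOn_eval hK (monomial s (p.coeff s))

theorem setIntegral_eval_eq_of_geomMoment_eq {d : ℕ} {K K' : Set (EuclideanSpace ℝ (Fin n))}
    (hK : IsCompact K) (hK' : IsCompact K')
    (hmom : ∀ α : Fin n → ℕ, ∑ i, α i ≤ d → geomMoment α K = geomMoment α K')
    {p : MvPolynomial (Fin n) ℝ} (hp : p.totalDegree ≤ d) :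
    ∫ x in K, eval x p = ∫ x in K', eval x p := by
  rw [setIntegral_eval_eq_sum_geomMoment hK, setIntegral_eval_eq_sum_geomMoment hK']
  refine Finset.sum_congr rfl fun s hs => ?_
  have hdeg := le_totalDegree hs
  rw [Finsupp.sum_fintype _ _ fun _ => rfl] at hdeg
  rw [hmom s (hdeg.trans hp)]

end Moments

section AffineMaps

variable {n m : ℕ}

theorem AffineMap.exists_totalDegree_le_one_eval_eq_apply
    (f : EuclideanSpace ℝ (Fin n) →ᵃ[ℝ] EuclideanSpace ℝ (Fin m)) (j : Fin m) :
    ∃ P : MvPolynomial (Fin n) ℝ, P.totalDegree ≤ 1 ∧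
      ∀ x : EuclideanSpace ℝ (Fin n), eval x P = f x j := by
  refine ⟨C (f 0 j) + ∑ i, C (f.linear (EuclideanSpace.single i 1) j) * X i, ?_, fun x => ?_⟩
  · refine (totalDegree_add _ _).trans (max_le (by simp) ?_)
    refine (totalDegree_finsetSum _ _).trans (Finset.sup_le fun i _ => ?_)
    exact (totalDegree_mul _ _).trans (by simp [totalDegree_X])
  · have hlin : f.linear x j = ∑ i, x i * f.linear (EuclideanSpace.single i 1) j := by
      conv_lhs => rw [← (EuclideanSpace.basisFun (Fin n) ℝ).sum_repr x]
      simp [map_sum, map_smul]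
    rw [f.decomp]
    simp [hlin, add_comm, mul_comm]

theorem AffineMap.exists_totalDegree_le_two_eval_eq_norm_sq
    (f : EuclideanSpace ℝ (Fin n) →ᵃ[ℝ] EuclideanSpace ℝ (Fin m)) :
    ∃ p : MvPolynomial (Fin n) ℝ, p.totalDegree ≤ 2 ∧
      ∀ x : EuclideanSpace ℝ (Fin n), eval x p = ‖f x‖ ^ 2 := by
  choose P hPdeg hPeval using f.exists_totalDegree_le_one_eval_eq_apply
  refine ⟨∑ j, P j ^ 2, ?_, fun x => ?_⟩
  · refine (totalDegree_finsetSum _ _).trans (Finset.sup_le fun j _ => ?_)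
    exact (totalDegree_pow _ _).trans (by linarith [hPdeg j])
  · simp [EuclideanSpace.real_norm_sq_eq, hPeval]

theorem AffineEquiv.isConvexBody_image_closedBall
    (A : EuclideanSpace ℝ (Fin n) ≃ᵃ[ℝ] EuclideanSpace ℝ (Fin n)) (c : EuclideanSpace ℝ (Fin n))
    {r : ℝ} (hr : 0 < r) : IsConvexBody (A '' Metric.closedBall c r) := by
  refine ⟨(isCompact_closedBall c r).image A.toAffineMap.continuous_of_finiteDimensional,
    (convex_closedBall c r).affine_image A.toAffineMap, ⟨A c, ?_⟩⟩
  have hopen : IsOpen (A.symm ⁻¹' Metric.ball c r) :=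
    Metric.isOpen_ball.preimage A.symm.toAffineMap.continuous_of_finiteDimensional
  refine interior_maximal ?_ hopen (by simpa using hr)
  rw [← A.preimage_symm]
  exact preimage_mono Metric.ball_subset_closedBall

end AffineMaps

/-- An ellipsoid is uniquely determined among all convex bodies in `ℝⁿ`
by its geometric moments of order at most 2. -/
theorem ellipsoid_determined_by_moments_up_to_two {n : ℕ}
    (E : Set (EuclideanSpace ℝ (Fin n))) (hE : IsEllipsoid E)
    (L : Set (EuclideanSpace ℝ (Fin n))) (hL : IsConvexBody L)
    (hmom : ∀ α : Fin n → ℕ, (∑ i, α i) ≤ 2 → geomMoment α L = geomMoment α E) :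
    L = E := by
  obtain ⟨A, hEA⟩ := hE
  have hEbody : IsConvexBody E := hEA ▸ A.isConvexBody_image_closedBall 0 one_pos
  obtain ⟨p, hpdeg, hpeval⟩ := A.symm.toAffineMap.exists_totalDegree_le_two_eval_eq_norm_sq
  have hφE : ∀ x : EuclideanSpace ℝ (Fin n), eval x (p - 1) ≤ 0 ↔ x ∈ E := fun x => by
    rw [hEA, ← A.preimage_symm, map_sub, map_one, hpeval, sub_nonpos, mem_preimage,
      mem_closedBall_zero_iff, AffineEquiv.coe_toAffineMap, sq_le_one_iff₀ (norm_nonneg _)]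
  have hφ := setIntegral_eval_eq_of_geomMoment_eq hL.1 hEbody.1 hmom
    ((totalDegree_sub p 1).trans (max_le hpdeg (by simp)))
  have hLE : volume (L \ E) = 0 :=
    measure_sdiff_eq_zero_of_setIntegral_eq hL.1.measurableSet hEbody.1.measurableSet
      (integrableOn_eval hL.1 _) (integrableOn_eval hEbody.1 _) (fun x => (hφE x).mpr)
      (fun x hx => not_le.mp (mt (hφE x).mp hx)) hφ
  have hLsub := hL.2.1.subset_of_measure_sdiff_eq_zero hL.2.2 hEbody.1.isClosed hLE
  have hEL : volume (E \ L) = 0 := by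
    have hvol := hmom 0 (by simp)
    rw [geomMoment_zero, geomMoment_zero] at hvol
    rw [← measureReal_eq_zero_iff ((measure_mono sdiff_subset).trans_lt hEbody.1.measure_lt_top).ne,
      measureReal_sdiff hLsub hL.1.measurableSet hEbody.1.measure_lt_top.ne, hvol, sub_self]
  exact hLsub.antisymm (hEbody.2.1.subset_of_measure_sdiff_eq_zero hEbody.2.2 hL.1.isClosed hEL)
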